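/- Let B be a bicategory and f : A ⟶ B a 1-cell such that for every object C the precomposition functor B(B,C) → B(A,C) (h ↦ h ∘ f on objects, θ ↦ θ ∗ 1_f on morphisms) is an equivalence of categories. Then f is an internal equivalence in B. -/
import Mathlib


open CategoryTheory Bicategory

/-- The precomposition functor `B(b,c) ⥤ B(a,c)` given by a 1-cell `f : a ⟶ b`:
on objects `h ↦ h ∘ f = f ≫ h`, on 2-cells `θ ↦ θ ∗ 1_f = f ◁ θ`. -/
def precompFunctor {B : Type*} [Bicategory B] {a b : B} (f : a ⟶ b) (c : B) :
    (b ⟶ c) ⥤ (a ⟶ c) where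
  obj h := f ≫ h
  map θ := f ◁ θ

/-- If precomposition with `f` is an equivalence of hom-categories for every
object `c`, then `f` is an internal equivalence. -/
theorem equivalence_of_precompFunctor_isEquivalence {B : Type*} [Bicategory B]
    {a b : B} (f : a ⟶ b)
    (h : ∀ c : B, (precompFunctor f c).IsEquivalence) :
    ∃ g : b ⟶ a, Nonempty (f ≫ g ≅ 𝟙 a) ∧ Nonempty (g ≫ f ≅ 𝟙 b) := by
  haveI := h a
  haveI := h b
  let g := (precompFunctor f a).objPreimage (𝟙 a)
  let η : f ≫ g ≅ 𝟙 a := (precompFunctor f a).objObjPreimageIso (𝟙 a)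
  refine ⟨g, ⟨η⟩, ⟨?_⟩⟩
  have e : (precompFunctor f b).obj (g ≫ f) ≅ (precompFunctor f b).obj (𝟙 b) :=
    (α_ f g f).symm ≪≫ whiskerRightIso η f ≪≫ λ_ f ≪≫ (ρ_ f).symm
  exact (precompFunctor f b).preimageIso e
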